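/- Fix an election (n, X₁,…,Xₙ, Y, β) and define on u ∈ X₁⊗⋯⊗Xₙ⊗Y: π^β(u) = inf { Σᵢ β(pᵢ−qᵢ)‖yᵢ‖ : u = Σᵢ(pᵢ−qᵢ)⊗yᵢ, pᵢ,qᵢ ∈ Σ_{X₁,…,Xₙ}, yᵢ ∈ Y } and ε^β(u) = sup { |⟨φ⊗y*, u⟩| : ‖φ‖_β ≤ 1, ‖y*‖ ≤ 1 }. Then a norm α^β on X₁⊗⋯⊗Xₙ⊗Y satisfies properties S1 and S2 of a Σ-tensor norm on spaces if and only if ε^β(u) ≤ α^β(u) ≤ π^β(u) for all u. In particular π^β and ε^β are the greatest and least such norms. -/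

import Mathlib

/- Common framework: Σ-operators, reasonable crossnorms, Σ-ideals and Σ-tensor norms,
following S. García-Hernández, "The duality between ideals of multilinear operators
and tensor norms". -/

open scoped TensorProduct
open PiTensorProduct

universe u

noncomputable section

/-- The Segre cone: the set of decomposable (elementary) tensors in `⨂ᵢ Xᵢ`. -/
def Segre (𝕜 : Type u) [RCLike 𝕜] {ι : Type} [Fintype ι] (X : ι → Type u)
    [∀ i, NormedAddCommGroup (X i)] [∀ i, NormedSpace 𝕜 (X i)] :
    Set (⨂[𝕜] i, X i) :=
  {u | ∃ x : (i : ι) → X i, u = ⨂ₜ[𝕜] i, x i}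



/-- The set of values `|x₁*⊗⋯⊗xₙ*(u)|` over functionals `xᵢ* ∈ B_{Xᵢ*}`. -/
def epsSet {𝕜 : Type u} [RCLike 𝕜] {ι : Type} [Fintype ι] {X : ι → Type u}
    [∀ i, NormedAddCommGroup (X i)] [∀ i, NormedSpace 𝕜 (X i)]
    (u : ⨂[𝕜] i, X i) : Set ℝ :=
  {r | ∃ f : ∀ i, X i →L[𝕜] 𝕜, (∀ i, ‖f i‖ ≤ 1) ∧
    r = ‖PiTensorProduct.lift
      ((ContinuousMultilinearMap.mkPiAlgebra 𝕜 ι 𝕜).compContinuousLinearMap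
        f).toMultilinearMap u‖}

/-- The classical injective tensor norm
`ε(u) = sup { |x₁*⊗⋯⊗xₙ*(u)| : xᵢ* ∈ B_{Xᵢ*} }`. -/
def epsSeminorm (𝕜 : Type u) [RCLike 𝕜] {ι : Type} [Fintype ι] (X : ι → Type u)
    [∀ i, NormedAddCommGroup (X i)] [∀ i, NormedSpace 𝕜 (X i)] :
    (⨂[𝕜] i, X i) → ℝ := fun u => sSup (epsSet u)

section EpsLemmas

variable {𝕜 : Type u} [RCLike 𝕜] {ι : Type} [Fintype ι] [Nonempty ι] {X : ι → Type u}
    [∀ i, NormedAddCommGroup (X i)] [∀ i, NormedSpace 𝕜 (X i)]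

theorem epsSet_le (u : ⨂[𝕜] i, X i) : ∀ r ∈ epsSet u, r ≤ projectiveSeminorm u := by
  rintro r ⟨f, hf, rfl⟩
  refine (norm_eval_le_projectiveSeminorm _ u).trans ?_
  rw [mul_comm]
  calc projectiveSeminorm u *
        ‖(ContinuousMultilinearMap.mkPiAlgebra 𝕜 ι 𝕜).compContinuousLinearMap f‖
      ≤ projectiveSeminorm u * 1 := by
        refine mul_le_mul_of_nonneg_left ?_ (apply_nonneg _ u)
        refine (ContinuousMultilinearMap.norm_compContinuousLinearMap_le _ _).trans ?_
        exact mul_le_one₀ ContinuousMultilinearMap.norm_mkPiAlgebra_le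
          (Finset.prod_nonneg fun i _ => norm_nonneg _)
          (Finset.prod_le_one (fun i _ => norm_nonneg _) (fun i _ => hf i))
    _ = projectiveSeminorm u := mul_one _

theorem epsSet_bdd (u : ⨂[𝕜] i, X i) : BddAbove (epsSet u) :=
  ⟨projectiveSeminorm u, fun r hr => epsSet_le u r hr⟩

theorem epsSeminorm_nonneg (u : ⨂[𝕜] i, X i) : 0 ≤ epsSeminorm 𝕜 X u :=
  Real.sSup_nonneg (by rintro r ⟨f, hf, rfl⟩; exact norm_nonneg _)

theorem epsSeminorm_le_projectiveSeminorm (u : ⨂[𝕜] i, X i) :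
    epsSeminorm 𝕜 X u ≤ projectiveSeminorm u :=
  Real.sSup_le (epsSet_le u) (apply_nonneg projectiveSeminorm u)

theorem epsSeminorm_add_le (u v : ⨂[𝕜] i, X i) :
    epsSeminorm 𝕜 X (u + v) ≤ epsSeminorm 𝕜 X u + epsSeminorm 𝕜 X v := by
  refine Real.sSup_le ?_ (add_nonneg (epsSeminorm_nonneg u) (epsSeminorm_nonneg v))
  rintro r ⟨f, hf, rfl⟩
  rw [map_add]
  refine (norm_add_le _ _).trans (add_le_add ?_ ?_)
  · exact le_csSup (epsSet_bdd u) ⟨f, hf, rfl⟩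
  · exact le_csSup (epsSet_bdd v) ⟨f, hf, rfl⟩

theorem epsSeminorm_smul_le (c : 𝕜) (u : ⨂[𝕜] i, X i) :
    epsSeminorm 𝕜 X (c • u) ≤ ‖c‖ * epsSeminorm 𝕜 X u := by
  refine Real.sSup_le ?_ (mul_nonneg (norm_nonneg c) (epsSeminorm_nonneg u))
  rintro r ⟨f, hf, rfl⟩
  rw [map_smul, norm_smul]
  exact mul_le_mul_of_nonneg_left (le_csSup (epsSet_bdd u) ⟨f, hf, rfl⟩) (norm_nonneg c)

theorem epsSeminorm_smul (c : 𝕜) (u : ⨂[𝕜] i, X i) :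
    epsSeminorm 𝕜 X (c • u) = ‖c‖ * epsSeminorm 𝕜 X u := by
  rcases eq_or_ne c 0 with rfl | hc
  · rw [norm_zero, zero_mul, zero_smul]
    refine le_antisymm (Real.sSup_le ?_ le_rfl) (epsSeminorm_nonneg 0)
    rintro r ⟨f, hf, rfl⟩
    simp
  · refine le_antisymm (epsSeminorm_smul_le c u) ?_
    have h := epsSeminorm_smul_le c⁻¹ (c • u)
    rw [inv_smul_smul₀ hc, norm_inv] at h
    calc ‖c‖ * epsSeminorm 𝕜 X u
        ≤ ‖c‖ * (‖c‖⁻¹ * epsSeminorm 𝕜 X (c • u)) :=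
          mul_le_mul_of_nonneg_left h (norm_nonneg c)
      _ = epsSeminorm 𝕜 X (c • u) := by
          rw [← mul_assoc, mul_inv_cancel₀ (norm_ne_zero_iff.mpr hc), one_mul]

end EpsLemmas


theorem projectiveSeminorm_map_le {𝕜 : Type u} [RCLike 𝕜] {ι : Type} [Fintype ι]
    {E F : ι → Type u} [∀ i, NormedAddCommGroup (E i)] [∀ i, NormedSpace 𝕜 (E i)]
    [∀ i, NormedAddCommGroup (F i)] [∀ i, NormedSpace 𝕜 (F i)]
    (g : ∀ i, E i →ₗ[𝕜] F i) (hg : ∀ i x, ‖g i x‖ ≤ ‖x‖) (u : ⨂[𝕜] i, E i) :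
    projectiveSeminorm (PiTensorProduct.map g u) ≤ projectiveSeminorm u := by
  rw [projectiveSeminorm_apply, projectiveSeminorm_apply]
  letI := nonempty_subtype.mpr (nonempty_lifts u)
  refine le_ciInf fun p => ?_
  have hmem : (FreeAddMonoid.ofList
      (List.map (fun y : 𝕜 × (∀ i, E i) => (y.1, fun i => g i (y.2 i))) p.1.toList) :
      FreeAddMonoid (𝕜 × ∀ i, F i)) ∈ lifts (PiTensorProduct.map g u) := by
    rw [mem_lifts_iff, FreeAddMonoid.toList_ofList]
    have hp := (mem_lifts_iff u p.1).mp p.2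
    calc (List.map (fun x : 𝕜 × (∀ i, F i) => x.1 • ⨂ₜ[𝕜] i, x.2 i)
          (List.map (fun y : 𝕜 × (∀ i, E i) => (y.1, fun i => g i (y.2 i))) p.1.toList)).sum
        = (List.map ((PiTensorProduct.map g) ∘ (fun x : 𝕜 × (∀ i, E i) =>
            x.1 • ⨂ₜ[𝕜] i, x.2 i)) p.1.toList).sum := by
          rw [List.map_map]
          congr 1
          refine List.map_congr_left fun y _ => ?_
          simp [PiTensorProduct.map_tprod]
      _ = PiTensorProduct.map g u := by
          rw [← List.map_map, ← map_list_sum, hp]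
  refine ciInf_le_of_le (bddBelow_projectiveSemiNormAux _) ⟨_, hmem⟩ ?_
  simp only [projectiveSeminormAux, FreeAddMonoid.toList_ofList, List.map_map]
  refine List.sum_le_sum fun y _ => ?_
  simp only [Function.comp_apply]
  refine mul_le_mul_of_nonneg_left ?_ (norm_nonneg _)
  exact Finset.prod_le_prod (fun i _ => norm_nonneg _) (fun i _ => hg i _)

/-- A reasonable crossnorm on `⨂ᵢ Xᵢ`: a seminorm-like functional lying between the
injective and projective tensor seminorms. -/
structure ReasonableCrossnorm (𝕜 : Type u) [RCLike 𝕜] {ι : Type} [Fintype ι] [Nonempty ι]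
    (X : ι → Type u) [∀ i, NormedAddCommGroup (X i)] [∀ i, NormedSpace 𝕜 (X i)] :
    Type u where
  toFun : (⨂[𝕜] i, X i) → ℝ
  add_le' : ∀ u v, toFun (u + v) ≤ toFun u + toFun v
  smul' : ∀ (c : 𝕜) (u), toFun (c • u) = ‖c‖ * toFun u
  le_proj' : ∀ u, toFun u ≤ projectiveSeminorm u
  inj_le' : ∀ u, epsSeminorm 𝕜 X u ≤ toFun u

section Basic

variable {𝕜 : Type u} [RCLike 𝕜] {ι : Type} [Fintype ι] [Nonempty ι] {X : ι → Type u}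
    [∀ i, NormedAddCommGroup (X i)] [∀ i, NormedSpace 𝕜 (X i)]
    {Y : Type u} [NormedAddCommGroup Y] [NormedSpace 𝕜 Y]

/-- The projective tensor norm `π` as a reasonable crossnorm. -/
def ReasonableCrossnorm.proj : ReasonableCrossnorm 𝕜 X where
  toFun := projectiveSeminorm
  add_le' := fun u v => map_add_le_add _ u v
  smul' := fun c u => map_smul_eq_mul _ c u
  le_proj' := fun _ => le_rfl
  inj_le' := fun u => epsSeminorm_le_projectiveSeminorm u

/-- The injective tensor norm `ε` as a reasonable crossnorm. -/
def ReasonableCrossnorm.inj : ReasonableCrossnorm 𝕜 X where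
  toFun := epsSeminorm 𝕜 X
  add_le' := fun u v => epsSeminorm_add_le u v
  smul' := fun c u => epsSeminorm_smul c u
  le_proj' := fun u => epsSeminorm_le_projectiveSeminorm u
  inj_le' := fun _ => le_rfl

/-- `𝓛^β(X₁,…,Xₙ)`: the space of linear functionals on `⨂ᵢ Xᵢ` that are bounded
with respect to `β` (equivalently, multilinear forms whose `β`-linearization is
bounded). -/
def BetaDual (β : ReasonableCrossnorm 𝕜 X) : Submodule 𝕜 ((⨂[𝕜] i, X i) →ₗ[𝕜] 𝕜) where
  carrier := {f | ∃ C, 0 ≤ C ∧ ∀ u, ‖f u‖ ≤ C * β.toFun u}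
  add_mem' := by
    rintro f g ⟨C, hC, hf⟩ ⟨D, hD, hg⟩
    exact ⟨C + D, add_nonneg hC hD, fun u => by
      simpa [add_mul] using (norm_add_le (f u) (g u)).trans (add_le_add (hf u) (hg u))⟩
  zero_mem' := ⟨0, le_rfl, fun u => by simp⟩
  smul_mem' := by
    rintro c f ⟨C, hC, hf⟩
    exact ⟨‖c‖ * C, mul_nonneg (norm_nonneg c) hC, fun u => by
      simpa [norm_smul, mul_assoc] using mul_le_mul_of_nonneg_left (hf u) (norm_nonneg c)⟩

/-- The dual norm `‖·‖_β` of a `β`-bounded functional (multilinear form). -/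
def betaDualNorm (β : ReasonableCrossnorm 𝕜 X) (f : (⨂[𝕜] i, X i) →ₗ[𝕜] 𝕜) : ℝ :=
  sInf {C | 0 ≤ C ∧ ∀ u, ‖f u‖ ≤ C * β.toFun u}

/-- Evaluation of continuous functionals at a point, as a linear map into the
algebraic dual of the topological dual. -/
def evalCLM (𝕜 : Type u) [RCLike 𝕜] (M : Type u) [NormedAddCommGroup M]
    [NormedSpace 𝕜 M] : M →ₗ[𝕜] ((M →L[𝕜] 𝕜) →ₗ[𝕜] 𝕜) where
  toFun y :=
    { toFun := fun g => g y
      map_add' := fun g h => rfl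
      map_smul' := fun c g => rfl }
  map_add' y z := by ext g; simp
  map_smul' c y := by ext g; simp

/-- Evaluation of `β`-bounded forms at a tensor. -/
def evalBeta (β : ReasonableCrossnorm 𝕜 X) :
    (⨂[𝕜] i, X i) →ₗ[𝕜] ((BetaDual β) →ₗ[𝕜] 𝕜) where
  toFun u :=
    { toFun := fun f => f.1 u
      map_add' := fun f g => rfl
      map_smul' := fun c f => rfl }
  map_add' u v := by ext f; exact f.1.map_add u v
  map_smul' c u := by ext f; exact f.1.map_smul c u

/-- Evaluation pairing: an element of `𝓛^β(X₁,…,Xₙ) ⊗ Y` acts as a functional on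
`X₁⊗⋯⊗Xₙ⊗Y*` by `⟨φ⊗y , u⊗y*⟩ = φ(u)·y*(y)`. -/
def evalLD (β : ReasonableCrossnorm 𝕜 X) :
    ((BetaDual β) ⊗[𝕜] Y) →ₗ[𝕜] (((⨂[𝕜] i, X i) ⊗[𝕜] (Y →L[𝕜] 𝕜)) →ₗ[𝕜] 𝕜) :=
  (TensorProduct.dualDistrib 𝕜 (⨂[𝕜] i, X i) (Y →L[𝕜] 𝕜)).comp
    (TensorProduct.map (BetaDual β).subtype (evalCLM 𝕜 Y))

/-- Converse pairing: an element of `X₁⊗⋯⊗Xₙ⊗Y` acts as a functional on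
`𝓛^β(X₁,…,Xₙ) ⊗ Y*` by `⟨u⊗y , φ⊗y*⟩ = φ(u)·y*(y)`. -/
def pairSF (β : ReasonableCrossnorm 𝕜 X) :
    ((⨂[𝕜] i, X i) ⊗[𝕜] Y) →ₗ[𝕜] (((BetaDual β) ⊗[𝕜] (Y →L[𝕜] 𝕜)) →ₗ[𝕜] 𝕜) :=
  (TensorProduct.dualDistrib 𝕜 (BetaDual β) (Y →L[𝕜] 𝕜)).comp
    (TensorProduct.map (evalBeta β) (evalCLM 𝕜 Y))

/-- The functional `φ ⊗ y*` on `X₁⊗⋯⊗Xₙ⊗Y`. -/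
def funcSY (φ : (⨂[𝕜] i, X i) →ₗ[𝕜] 𝕜) (g : Y →L[𝕜] 𝕜) :
    ((⨂[𝕜] i, X i) ⊗[𝕜] Y) →ₗ[𝕜] 𝕜 :=
  TensorProduct.dualDistrib 𝕜 (⨂[𝕜] i, X i) Y (φ ⊗ₜ[𝕜] (g : Y →ₗ[𝕜] 𝕜))

/-- The rank one multilinear operator `φ · y : (x¹,…,xⁿ) ↦ φ(x¹,…,xⁿ)·y`. -/
def rankOne (φ : MultilinearMap 𝕜 X 𝕜) (y : Y) : MultilinearMap 𝕜 X Y :=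
  (LinearMap.toSpanSingleton 𝕜 Y y).compMultilinearMap φ

/-- The multilinear operator associated to a linear map on the tensor product. -/
def toMulti (L : (⨂[𝕜] i, X i) →ₗ[𝕜] Y) : MultilinearMap 𝕜 X Y :=
  L.compMultilinearMap (PiTensorProduct.tprod 𝕜)

/-- The finite rank operator (as a linear map on the tensor product) associated to
`v ∈ 𝓛^β(X₁,…,Xₙ) ⊗ Y` via `φ ⊗ y ↦ φ(·)y`. -/
def toOp (β : ReasonableCrossnorm 𝕜 X) :
    ((BetaDual β) ⊗[𝕜] Y) →ₗ[𝕜] ((⨂[𝕜] i, X i) →ₗ[𝕜] Y) :=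
  TensorProduct.lift ((LinearMap.smulRightₗ).comp (BetaDual β).subtype)

/-- The restriction `β|` of a reasonable crossnorm to subspaces `Eᵢ ⊂ Xᵢ`
(Remark 2.1 of the paper: it is again a reasonable crossnorm). -/
def ReasonableCrossnorm.restrict (β : ReasonableCrossnorm 𝕜 X)
    (E : ∀ i, Submodule 𝕜 (X i)) :
    ReasonableCrossnorm 𝕜 (fun i => (E i : Type u)) where
  toFun u := β.toFun (PiTensorProduct.map (fun i => (E i).subtype) u)
  add_le' u v := by simp only [map_add]; exact β.add_le' _ _
  smul' c u := by simp only [map_smul]; exact β.smul' _ _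
  le_proj' u :=
    (β.le_proj' _).trans
      (projectiveSeminorm_map_le _ (fun i x => le_of_eq rfl) u)
  inj_le' u := by
    refine Real.sSup_le ?_ (le_trans (epsSeminorm_nonneg _) (β.inj_le' _))
    rintro r ⟨f, hf, rfl⟩
    choose g hgx hgn using fun i => exists_extension_norm_eq (E i) (f i)
    have key : PiTensorProduct.lift
        ((ContinuousMultilinearMap.mkPiAlgebra 𝕜 ι 𝕜).compContinuousLinearMap
          f).toMultilinearMap u =
        PiTensorProduct.lift
          ((ContinuousMultilinearMap.mkPiAlgebra 𝕜 ι 𝕜).compContinuousLinearMap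
            g).toMultilinearMap
          (PiTensorProduct.map (fun i => (E i).subtype) u) := by
      rw [← LinearMap.comp_apply, PiTensorProduct.lift_comp_map]
      congr 1
      ext m
      simp only [LinearMap.compMultilinearMap_apply, PiTensorProduct.lift.tprod,
        ContinuousMultilinearMap.coe_coe, MultilinearMap.compLinearMap_apply,
        ContinuousMultilinearMap.compContinuousLinearMap_apply,
        ContinuousMultilinearMap.mkPiAlgebra_apply]
      exact Finset.prod_congr rfl fun i _ => (hgx i (m i)).symm
    rw [key]
    refine le_trans (le_csSup (epsSet_bdd _) ⟨g, fun i => (hgn i).le.trans (hf i), rfl⟩)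
      (β.inj_le' _)

/-- Restriction of `β`-bounded forms to subspaces. -/
def restrictDual (β : ReasonableCrossnorm 𝕜 X) (E : ∀ i, Submodule 𝕜 (X i)) :
    (BetaDual β) →ₗ[𝕜] (BetaDual (β.restrict E)) where
  toFun f := ⟨f.1 ∘ₗ PiTensorProduct.map (fun i => (E i).subtype),
    by obtain ⟨C, hC, hb⟩ := f.2; exact ⟨C, hC, fun u => hb _⟩⟩
  map_add' f g := by ext u; rfl
  map_smul' c f := by ext u; rfl

/-- The operator `Q_L ∘ f_T ∘ I_{E₁,…,Eₙ}` between finite dimensional spaces. -/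
def smallOp {L : Submodule 𝕜 Y} (hL : IsClosed (L : Set Y))
    (T : MultilinearMap 𝕜 X Y) (E : ∀ i, Submodule 𝕜 (X i)) :
    MultilinearMap 𝕜 (fun i => (E i : Type u)) (Y ⧸ L) :=
  toMulti (L.mkQ ∘ₗ PiTensorProduct.lift T ∘ₗ PiTensorProduct.map (fun i => (E i).subtype))

end Basic
section Norms

variable {𝕜 : Type u} [RCLike 𝕜] {ι : Type} [Fintype ι] [Nonempty ι] {X : ι → Type u}
    [∀ i, NormedAddCommGroup (X i)] [∀ i, NormedSpace 𝕜 (X i)]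
    {Y : Type u} [NormedAddCommGroup Y] [NormedSpace 𝕜 Y]

/-- The Lipschitz constant `Lip^β(f)` of (the restriction to the Segre cone of) a linear
map on the tensor product, with respect to the metric induced by `β`. -/
def lipschitzNormOn (β : ReasonableCrossnorm 𝕜 X) (f : (⨂[𝕜] i, X i) →ₗ[𝕜] Y) : ℝ :=
  sInf {C | 0 ≤ C ∧ ∀ p ∈ Segre 𝕜 X, ∀ q ∈ Segre 𝕜 X,
    ‖f p - f q‖ ≤ C * β.toFun (p - q)}

/-- The greatest Σ-tensor norm on spaces, `π^β`. -/
def piBetaS (β : ReasonableCrossnorm 𝕜 X) (u : (⨂[𝕜] i, X i) ⊗[𝕜] Y) : ℝ :=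
  sInf {r | ∃ (m : ℕ) (p q : Fin m → ⨂[𝕜] i, X i) (y : Fin m → Y),
    (∀ k, p k ∈ Segre 𝕜 X ∧ q k ∈ Segre 𝕜 X) ∧
    u = ∑ k, (p k - q k) ⊗ₜ[𝕜] y k ∧ r = ∑ k, β.toFun (p k - q k) * ‖y k‖}

/-- The least Σ-tensor norm on spaces, `ε^β`. -/
def epsBetaS (β : ReasonableCrossnorm 𝕜 X) (u : (⨂[𝕜] i, X i) ⊗[𝕜] Y) : ℝ :=
  sSup {r | ∃ (φ : (⨂[𝕜] i, X i) →ₗ[𝕜] 𝕜) (g : Y →L[𝕜] 𝕜),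
    (∀ w, ‖φ w‖ ≤ β.toFun w) ∧ ‖g‖ ≤ 1 ∧ r = ‖funcSY φ g u‖}

/-- The greatest Σ-tensor norm on duals, `π_β`. -/
def piBetaD (β : ReasonableCrossnorm 𝕜 X) (v : (BetaDual β) ⊗[𝕜] Y) : ℝ :=
  sInf {r | ∃ (m : ℕ) (f : Fin m → BetaDual β) (y : Fin m → Y) (C : Fin m → ℝ),
    (∀ k, 0 ≤ C k ∧ ∀ u, ‖(f k).1 u‖ ≤ C k * β.toFun u) ∧
    v = ∑ k, (f k) ⊗ₜ[𝕜] (y k) ∧ r = ∑ k, C k * ‖y k‖}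

/-- The least Σ-tensor norm on duals, `ε_β`. -/
def epsBetaD (β : ReasonableCrossnorm 𝕜 X) (v : (BetaDual β) ⊗[𝕜] Y) : ℝ :=
  sSup {r | ∃ p ∈ Segre 𝕜 X, ∃ q ∈ Segre 𝕜 X, ∃ g : Y →L[𝕜] 𝕜,
    β.toFun (p - q) ≤ 1 ∧ ‖g‖ ≤ 1 ∧ r = ‖evalLD β v ((p - q) ⊗ₜ[𝕜] g)‖}

end Norms
section Structures

variable (𝕜 : Type u) [RCLike 𝕜]

/-- A Σ-ideal of multilinear operators on the class of normed (Banach) spaces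
(Definition 3.1): an assignment, to each election `(n, X₁,…,Xₙ, Y, β)`, of a class of
multilinear operators together with an ideal norm, satisfying I1, I2, I3. -/
structure SigmaIdeal where
  Mem : ∀ {ι : Type} [Fintype ι] [Nonempty ι] {X : ι → Type u}
    [∀ i, NormedAddCommGroup (X i)] [∀ i, NormedSpace 𝕜 (X i)]
    {Y : Type u} [NormedAddCommGroup Y] [NormedSpace 𝕜 Y],
    ReasonableCrossnorm 𝕜 X → MultilinearMap 𝕜 X Y → Prop
  anorm : ∀ {ι : Type} [Fintype ι] [Nonempty ι] {X : ι → Type u}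
    [∀ i, NormedAddCommGroup (X i)] [∀ i, NormedSpace 𝕜 (X i)]
    {Y : Type u} [NormedAddCommGroup Y] [NormedSpace 𝕜 Y],
    ReasonableCrossnorm 𝕜 X → MultilinearMap 𝕜 X Y → ℝ
  /-- I1: rank one operators belong to the components. -/
  I1 : ∀ {ι : Type} [Fintype ι] [Nonempty ι] {X : ι → Type u}
    [∀ i, NormedAddCommGroup (X i)] [∀ i, NormedSpace 𝕜 (X i)]
    {Y : Type u} [NormedAddCommGroup Y] [NormedSpace 𝕜 Y]
    (β : ReasonableCrossnorm 𝕜 X) (φ : MultilinearMap 𝕜 X 𝕜) (C : ℝ), 0 ≤ C →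
    (∀ u, ‖PiTensorProduct.lift φ u‖ ≤ C * β.toFun u) → ∀ y : Y,
    Mem β (rankOne φ y) ∧ anorm β (rankOne φ y) ≤ C * ‖y‖
  /-- I2: `Lip^β(f_T) ≤ A^β(T)`. -/
  I2 : ∀ {ι : Type} [Fintype ι] [Nonempty ι] {X : ι → Type u}
    [∀ i, NormedAddCommGroup (X i)] [∀ i, NormedSpace 𝕜 (X i)]
    {Y : Type u} [NormedAddCommGroup Y] [NormedSpace 𝕜 Y]
    (β : ReasonableCrossnorm 𝕜 X) (T : MultilinearMap 𝕜 X Y), Mem β T →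
    ∀ p ∈ Segre 𝕜 X, ∀ q ∈ Segre 𝕜 X,
      ‖PiTensorProduct.lift T p - PiTensorProduct.lift T q‖ ≤ anorm β T * β.toFun (p - q)
  /-- I3: the Σ-ideal property. -/
  I3 : ∀ {ι κ : Type} [Fintype ι] [Nonempty ι] [Fintype κ] [Nonempty κ]
    {X : ι → Type u} [∀ i, NormedAddCommGroup (X i)] [∀ i, NormedSpace 𝕜 (X i)]
    {Z : κ → Type u} [∀ j, NormedAddCommGroup (Z j)] [∀ j, NormedSpace 𝕜 (Z j)]
    {Y W : Type u} [NormedAddCommGroup Y] [NormedSpace 𝕜 Y]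
    [NormedAddCommGroup W] [NormedSpace 𝕜 W]
    (β : ReasonableCrossnorm 𝕜 X) (θ : ReasonableCrossnorm 𝕜 Z)
    (R : (⨂[𝕜] j, Z j) →ₗ[𝕜] (⨂[𝕜] i, X i)) (CR : ℝ), 0 ≤ CR →
    (∀ v, β.toFun (R v) ≤ CR * θ.toFun v) →
    (∀ p ∈ Segre 𝕜 Z, R p ∈ Segre 𝕜 X) →
    ∀ (T : MultilinearMap 𝕜 X Y), Mem β T → ∀ (S : Y →L[𝕜] W),
    Mem θ (toMulti (S.toLinearMap ∘ₗ PiTensorProduct.lift T ∘ₗ R)) ∧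
      anorm θ (toMulti (S.toLinearMap ∘ₗ PiTensorProduct.lift T ∘ₗ R)) ≤
        CR * anorm β T * ‖S‖

/-- A Σ-tensor norm on spaces (Definition 4.1): an assignment, to each election, of a
norm on `X₁⊗⋯⊗Xₙ⊗Y` satisfying S1, S2 and the uniform property S3. -/
structure SigmaTensorNormOnSpaces where
  tn : ∀ {ι : Type} [Fintype ι] [Nonempty ι] {X : ι → Type u}
    [∀ i, NormedAddCommGroup (X i)] [∀ i, NormedSpace 𝕜 (X i)]
    {Y : Type u} [NormedAddCommGroup Y] [NormedSpace 𝕜 Y],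
    ReasonableCrossnorm 𝕜 X → ((⨂[𝕜] i, X i) ⊗[𝕜] Y) → ℝ
  tn_add_le : ∀ {ι : Type} [Fintype ι] [Nonempty ι] {X : ι → Type u}
    [∀ i, NormedAddCommGroup (X i)] [∀ i, NormedSpace 𝕜 (X i)]
    {Y : Type u} [NormedAddCommGroup Y] [NormedSpace 𝕜 Y]
    (β : ReasonableCrossnorm 𝕜 X) (u v : (⨂[𝕜] i, X i) ⊗[𝕜] Y),
    tn β (u + v) ≤ tn β u + tn β v
  tn_smul : ∀ {ι : Type} [Fintype ι] [Nonempty ι] {X : ι → Type u}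
    [∀ i, NormedAddCommGroup (X i)] [∀ i, NormedSpace 𝕜 (X i)]
    {Y : Type u} [NormedAddCommGroup Y] [NormedSpace 𝕜 Y]
    (β : ReasonableCrossnorm 𝕜 X) (c : 𝕜) (u : (⨂[𝕜] i, X i) ⊗[𝕜] Y),
    tn β (c • u) = ‖c‖ * tn β u
  /-- S1. -/
  S1 : ∀ {ι : Type} [Fintype ι] [Nonempty ι] {X : ι → Type u}
    [∀ i, NormedAddCommGroup (X i)] [∀ i, NormedSpace 𝕜 (X i)]
    {Y : Type u} [NormedAddCommGroup Y] [NormedSpace 𝕜 Y]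
    (β : ReasonableCrossnorm 𝕜 X), ∀ p ∈ Segre 𝕜 X, ∀ q ∈ Segre 𝕜 X, ∀ y : Y,
    tn β ((p - q) ⊗ₜ[𝕜] y) ≤ β.toFun (p - q) * ‖y‖
  /-- S2. -/
  S2 : ∀ {ι : Type} [Fintype ι] [Nonempty ι] {X : ι → Type u}
    [∀ i, NormedAddCommGroup (X i)] [∀ i, NormedSpace 𝕜 (X i)]
    {Y : Type u} [NormedAddCommGroup Y] [NormedSpace 𝕜 Y]
    (β : ReasonableCrossnorm 𝕜 X) (φ : (⨂[𝕜] i, X i) →ₗ[𝕜] 𝕜) (C : ℝ), 0 ≤ C →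
    (∀ w, ‖φ w‖ ≤ C * β.toFun w) → ∀ (g : Y →L[𝕜] 𝕜) (u : (⨂[𝕜] i, X i) ⊗[𝕜] Y),
    ‖funcSY φ g u‖ ≤ C * ‖g‖ * tn β u
  /-- S3: the uniform property. -/
  S3 : ∀ {ι κ : Type} [Fintype ι] [Nonempty ι] [Fintype κ] [Nonempty κ]
    {X : ι → Type u} [∀ i, NormedAddCommGroup (X i)] [∀ i, NormedSpace 𝕜 (X i)]
    {Z : κ → Type u} [∀ j, NormedAddCommGroup (Z j)] [∀ j, NormedSpace 𝕜 (Z j)]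
    {Y W : Type u} [NormedAddCommGroup Y] [NormedSpace 𝕜 Y]
    [NormedAddCommGroup W] [NormedSpace 𝕜 W]
    (β : ReasonableCrossnorm 𝕜 X) (θ : ReasonableCrossnorm 𝕜 Z)
    (R : (⨂[𝕜] j, Z j) →ₗ[𝕜] (⨂[𝕜] i, X i)) (CR : ℝ), 0 ≤ CR →
    (∀ v, β.toFun (R v) ≤ CR * θ.toFun v) →
    (∀ p ∈ Segre 𝕜 Z, R p ∈ Segre 𝕜 X) →
    ∀ (S : W →L[𝕜] Y) (u : (⨂[𝕜] j, Z j) ⊗[𝕜] W),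
    tn β (TensorProduct.map R S.toLinearMap u) ≤ CR * ‖S‖ * tn θ u

/-- A Σ-tensor norm on duals (Definition 4.2): an assignment, to each election, of a
norm on `𝓛^β(X₁,…,Xₙ) ⊗ Y` satisfying D1, D2 and the uniform property D3 with respect
to Σ-preserving operators. -/
structure SigmaTensorNormOnDuals where
  tn : ∀ {ι : Type} [Fintype ι] [Nonempty ι] {X : ι → Type u}
    [∀ i, NormedAddCommGroup (X i)] [∀ i, NormedSpace 𝕜 (X i)]
    {Y : Type u} [NormedAddCommGroup Y] [NormedSpace 𝕜 Y]
    (β : ReasonableCrossnorm 𝕜 X), ((BetaDual β) ⊗[𝕜] Y) → ℝ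
  tn_add_le : ∀ {ι : Type} [Fintype ι] [Nonempty ι] {X : ι → Type u}
    [∀ i, NormedAddCommGroup (X i)] [∀ i, NormedSpace 𝕜 (X i)]
    {Y : Type u} [NormedAddCommGroup Y] [NormedSpace 𝕜 Y]
    (β : ReasonableCrossnorm 𝕜 X) (v w : (BetaDual β) ⊗[𝕜] Y),
    tn β (v + w) ≤ tn β v + tn β w
  tn_smul : ∀ {ι : Type} [Fintype ι] [Nonempty ι] {X : ι → Type u}
    [∀ i, NormedAddCommGroup (X i)] [∀ i, NormedSpace 𝕜 (X i)]
    {Y : Type u} [NormedAddCommGroup Y] [NormedSpace 𝕜 Y]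
    (β : ReasonableCrossnorm 𝕜 X) (c : 𝕜) (v : (BetaDual β) ⊗[𝕜] Y),
    tn β (c • v) = ‖c‖ * tn β v
  /-- D1. -/
  D1 : ∀ {ι : Type} [Fintype ι] [Nonempty ι] {X : ι → Type u}
    [∀ i, NormedAddCommGroup (X i)] [∀ i, NormedSpace 𝕜 (X i)]
    {Y : Type u} [NormedAddCommGroup Y] [NormedSpace 𝕜 Y]
    (β : ReasonableCrossnorm 𝕜 X) (f : BetaDual β) (C : ℝ), 0 ≤ C →
    (∀ u, ‖f.1 u‖ ≤ C * β.toFun u) → ∀ y : Y, tn β (f ⊗ₜ[𝕜] y) ≤ C * ‖y‖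
  /-- D2. -/
  D2 : ∀ {ι : Type} [Fintype ι] [Nonempty ι] {X : ι → Type u}
    [∀ i, NormedAddCommGroup (X i)] [∀ i, NormedSpace 𝕜 (X i)]
    {Y : Type u} [NormedAddCommGroup Y] [NormedSpace 𝕜 Y]
    (β : ReasonableCrossnorm 𝕜 X), ∀ p ∈ Segre 𝕜 X, ∀ q ∈ Segre 𝕜 X,
    ∀ (g : Y →L[𝕜] 𝕜) (v : (BetaDual β) ⊗[𝕜] Y),
    ‖evalLD β v ((p - q) ⊗ₜ[𝕜] g)‖ ≤ β.toFun (p - q) * ‖g‖ * tn β v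
  /-- D3: the uniform property with respect to Σ-preserving operators. -/
  D3 : ∀ {ι κ : Type} [Fintype ι] [Nonempty ι] [Fintype κ] [Nonempty κ]
    {X : ι → Type u} [∀ i, NormedAddCommGroup (X i)] [∀ i, NormedSpace 𝕜 (X i)]
    {Z : κ → Type u} [∀ j, NormedAddCommGroup (Z j)] [∀ j, NormedSpace 𝕜 (Z j)]
    {Y W : Type u} [NormedAddCommGroup Y] [NormedSpace 𝕜 Y]
    [NormedAddCommGroup W] [NormedSpace 𝕜 W]
    (β : ReasonableCrossnorm 𝕜 X) (θ : ReasonableCrossnorm 𝕜 Z)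
    (A : (BetaDual β) →ₗ[𝕜] (BetaDual θ)) (CA : ℝ), 0 ≤ CA →
    (∀ (f : BetaDual β) (C : ℝ), 0 ≤ C → (∀ u, ‖f.1 u‖ ≤ C * β.toFun u) →
      ∀ w, ‖(A f).1 w‖ ≤ CA * C * θ.toFun w) →
    (∀ q ∈ Segre 𝕜 Z, ∃ p ∈ Segre 𝕜 X, ∀ f : BetaDual β, (A f).1 q = f.1 p) →
    ∀ (B : Y →L[𝕜] W) (v : (BetaDual β) ⊗[𝕜] Y),
    tn θ (TensorProduct.map A B.toLinearMap v) ≤ CA * ‖B‖ * tn β v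

end Structures
section StructuresFin

variable (𝕜 : Type u) [RCLike 𝕜]

/-- A Σ-ideal of multilinear operators on the class of finite dimensional normed spaces
(Definition 3.1): an assignment, to each election `(n, X₁,…,Xₙ, Y, β)`, of a class of
multilinear operators together with an ideal norm, satisfying I1, I2, I3. -/
structure SigmaIdealFin where
  Mem : ∀ {ι : Type} [Fintype ι] [Nonempty ι] {X : ι → Type u}
    [∀ i, NormedAddCommGroup (X i)] [∀ i, NormedSpace 𝕜 (X i)] [∀ i, FiniteDimensional 𝕜 (X i)]
    {Y : Type u} [NormedAddCommGroup Y] [NormedSpace 𝕜 Y] [FiniteDimensional 𝕜 Y],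
    ReasonableCrossnorm 𝕜 X → MultilinearMap 𝕜 X Y → Prop
  anorm : ∀ {ι : Type} [Fintype ι] [Nonempty ι] {X : ι → Type u}
    [∀ i, NormedAddCommGroup (X i)] [∀ i, NormedSpace 𝕜 (X i)] [∀ i, FiniteDimensional 𝕜 (X i)]
    {Y : Type u} [NormedAddCommGroup Y] [NormedSpace 𝕜 Y] [FiniteDimensional 𝕜 Y],
    ReasonableCrossnorm 𝕜 X → MultilinearMap 𝕜 X Y → ℝ
  /-- I1: rank one operators belong to the components. -/
  I1 : ∀ {ι : Type} [Fintype ι] [Nonempty ι] {X : ι → Type u}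
    [∀ i, NormedAddCommGroup (X i)] [∀ i, NormedSpace 𝕜 (X i)] [∀ i, FiniteDimensional 𝕜 (X i)]
    {Y : Type u} [NormedAddCommGroup Y] [NormedSpace 𝕜 Y] [FiniteDimensional 𝕜 Y]
    (β : ReasonableCrossnorm 𝕜 X) (φ : MultilinearMap 𝕜 X 𝕜) (C : ℝ), 0 ≤ C →
    (∀ u, ‖PiTensorProduct.lift φ u‖ ≤ C * β.toFun u) → ∀ y : Y,
    Mem β (rankOne φ y) ∧ anorm β (rankOne φ y) ≤ C * ‖y‖
  /-- I2: `Lip^β(f_T) ≤ A^β(T)`. -/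
  I2 : ∀ {ι : Type} [Fintype ι] [Nonempty ι] {X : ι → Type u}
    [∀ i, NormedAddCommGroup (X i)] [∀ i, NormedSpace 𝕜 (X i)] [∀ i, FiniteDimensional 𝕜 (X i)]
    {Y : Type u} [NormedAddCommGroup Y] [NormedSpace 𝕜 Y] [FiniteDimensional 𝕜 Y]
    (β : ReasonableCrossnorm 𝕜 X) (T : MultilinearMap 𝕜 X Y), Mem β T →
    ∀ p ∈ Segre 𝕜 X, ∀ q ∈ Segre 𝕜 X,
      ‖PiTensorProduct.lift T p - PiTensorProduct.lift T q‖ ≤ anorm β T * β.toFun (p - q)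
  /-- I3: the Σ-ideal property. -/
  I3 : ∀ {ι κ : Type} [Fintype ι] [Nonempty ι] [Fintype κ] [Nonempty κ]
    {X : ι → Type u} [∀ i, NormedAddCommGroup (X i)] [∀ i, NormedSpace 𝕜 (X i)] [∀ i, FiniteDimensional 𝕜 (X i)]
    {Z : κ → Type u} [∀ j, NormedAddCommGroup (Z j)] [∀ j, NormedSpace 𝕜 (Z j)] [∀ j, FiniteDimensional 𝕜 (Z j)]
    {Y W : Type u} [NormedAddCommGroup Y] [NormedSpace 𝕜 Y] [FiniteDimensional 𝕜 Y]
    [NormedAddCommGroup W] [NormedSpace 𝕜 W] [FiniteDimensional 𝕜 W]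
    (β : ReasonableCrossnorm 𝕜 X) (θ : ReasonableCrossnorm 𝕜 Z)
    (R : (⨂[𝕜] j, Z j) →ₗ[𝕜] (⨂[𝕜] i, X i)) (CR : ℝ), 0 ≤ CR →
    (∀ v, β.toFun (R v) ≤ CR * θ.toFun v) →
    (∀ p ∈ Segre 𝕜 Z, R p ∈ Segre 𝕜 X) →
    ∀ (T : MultilinearMap 𝕜 X Y), Mem β T → ∀ (S : Y →L[𝕜] W),
    Mem θ (toMulti (S.toLinearMap ∘ₗ PiTensorProduct.lift T ∘ₗ R)) ∧
      anorm θ (toMulti (S.toLinearMap ∘ₗ PiTensorProduct.lift T ∘ₗ R)) ≤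
        CR * anorm β T * ‖S‖

/-- A Σ-tensor norm on spaces (Definition 4.1): an assignment, to each election, of a
norm on `X₁⊗⋯⊗Xₙ⊗Y` satisfying S1, S2 and the uniform property S3. -/
structure SigmaTensorNormOnSpacesFin where
  tn : ∀ {ι : Type} [Fintype ι] [Nonempty ι] {X : ι → Type u}
    [∀ i, NormedAddCommGroup (X i)] [∀ i, NormedSpace 𝕜 (X i)] [∀ i, FiniteDimensional 𝕜 (X i)]
    {Y : Type u} [NormedAddCommGroup Y] [NormedSpace 𝕜 Y] [FiniteDimensional 𝕜 Y],
    ReasonableCrossnorm 𝕜 X → ((⨂[𝕜] i, X i) ⊗[𝕜] Y) → ℝ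
  tn_add_le : ∀ {ι : Type} [Fintype ι] [Nonempty ι] {X : ι → Type u}
    [∀ i, NormedAddCommGroup (X i)] [∀ i, NormedSpace 𝕜 (X i)] [∀ i, FiniteDimensional 𝕜 (X i)]
    {Y : Type u} [NormedAddCommGroup Y] [NormedSpace 𝕜 Y] [FiniteDimensional 𝕜 Y]
    (β : ReasonableCrossnorm 𝕜 X) (u v : (⨂[𝕜] i, X i) ⊗[𝕜] Y),
    tn β (u + v) ≤ tn β u + tn β v
  tn_smul : ∀ {ι : Type} [Fintype ι] [Nonempty ι] {X : ι → Type u}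
    [∀ i, NormedAddCommGroup (X i)] [∀ i, NormedSpace 𝕜 (X i)] [∀ i, FiniteDimensional 𝕜 (X i)]
    {Y : Type u} [NormedAddCommGroup Y] [NormedSpace 𝕜 Y] [FiniteDimensional 𝕜 Y]
    (β : ReasonableCrossnorm 𝕜 X) (c : 𝕜) (u : (⨂[𝕜] i, X i) ⊗[𝕜] Y),
    tn β (c • u) = ‖c‖ * tn β u
  /-- S1. -/
  S1 : ∀ {ι : Type} [Fintype ι] [Nonempty ι] {X : ι → Type u}
    [∀ i, NormedAddCommGroup (X i)] [∀ i, NormedSpace 𝕜 (X i)] [∀ i, FiniteDimensional 𝕜 (X i)]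
    {Y : Type u} [NormedAddCommGroup Y] [NormedSpace 𝕜 Y] [FiniteDimensional 𝕜 Y]
    (β : ReasonableCrossnorm 𝕜 X), ∀ p ∈ Segre 𝕜 X, ∀ q ∈ Segre 𝕜 X, ∀ y : Y,
    tn β ((p - q) ⊗ₜ[𝕜] y) ≤ β.toFun (p - q) * ‖y‖
  /-- S2. -/
  S2 : ∀ {ι : Type} [Fintype ι] [Nonempty ι] {X : ι → Type u}
    [∀ i, NormedAddCommGroup (X i)] [∀ i, NormedSpace 𝕜 (X i)] [∀ i, FiniteDimensional 𝕜 (X i)]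
    {Y : Type u} [NormedAddCommGroup Y] [NormedSpace 𝕜 Y] [FiniteDimensional 𝕜 Y]
    (β : ReasonableCrossnorm 𝕜 X) (φ : (⨂[𝕜] i, X i) →ₗ[𝕜] 𝕜) (C : ℝ), 0 ≤ C →
    (∀ w, ‖φ w‖ ≤ C * β.toFun w) → ∀ (g : Y →L[𝕜] 𝕜) (u : (⨂[𝕜] i, X i) ⊗[𝕜] Y),
    ‖funcSY φ g u‖ ≤ C * ‖g‖ * tn β u
  /-- S3: the uniform property. -/
  S3 : ∀ {ι κ : Type} [Fintype ι] [Nonempty ι] [Fintype κ] [Nonempty κ]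
    {X : ι → Type u} [∀ i, NormedAddCommGroup (X i)] [∀ i, NormedSpace 𝕜 (X i)] [∀ i, FiniteDimensional 𝕜 (X i)]
    {Z : κ → Type u} [∀ j, NormedAddCommGroup (Z j)] [∀ j, NormedSpace 𝕜 (Z j)] [∀ j, FiniteDimensional 𝕜 (Z j)]
    {Y W : Type u} [NormedAddCommGroup Y] [NormedSpace 𝕜 Y] [FiniteDimensional 𝕜 Y]
    [NormedAddCommGroup W] [NormedSpace 𝕜 W] [FiniteDimensional 𝕜 W]
    (β : ReasonableCrossnorm 𝕜 X) (θ : ReasonableCrossnorm 𝕜 Z)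
    (R : (⨂[𝕜] j, Z j) →ₗ[𝕜] (⨂[𝕜] i, X i)) (CR : ℝ), 0 ≤ CR →
    (∀ v, β.toFun (R v) ≤ CR * θ.toFun v) →
    (∀ p ∈ Segre 𝕜 Z, R p ∈ Segre 𝕜 X) →
    ∀ (S : W →L[𝕜] Y) (u : (⨂[𝕜] j, Z j) ⊗[𝕜] W),
    tn β (TensorProduct.map R S.toLinearMap u) ≤ CR * ‖S‖ * tn θ u

/-- A Σ-tensor norm on duals (Definition 4.2): an assignment, to each election, of a
norm on `𝓛^β(X₁,…,Xₙ) ⊗ Y` satisfying D1, D2 and the uniform property D3 with respect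
to Σ-preserving operators. -/
structure SigmaTensorNormOnDualsFin where
  tn : ∀ {ι : Type} [Fintype ι] [Nonempty ι] {X : ι → Type u}
    [∀ i, NormedAddCommGroup (X i)] [∀ i, NormedSpace 𝕜 (X i)] [∀ i, FiniteDimensional 𝕜 (X i)]
    {Y : Type u} [NormedAddCommGroup Y] [NormedSpace 𝕜 Y] [FiniteDimensional 𝕜 Y]
    (β : ReasonableCrossnorm 𝕜 X), ((BetaDual β) ⊗[𝕜] Y) → ℝ
  tn_add_le : ∀ {ι : Type} [Fintype ι] [Nonempty ι] {X : ι → Type u}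
    [∀ i, NormedAddCommGroup (X i)] [∀ i, NormedSpace 𝕜 (X i)] [∀ i, FiniteDimensional 𝕜 (X i)]
    {Y : Type u} [NormedAddCommGroup Y] [NormedSpace 𝕜 Y] [FiniteDimensional 𝕜 Y]
    (β : ReasonableCrossnorm 𝕜 X) (v w : (BetaDual β) ⊗[𝕜] Y),
    tn β (v + w) ≤ tn β v + tn β w
  tn_smul : ∀ {ι : Type} [Fintype ι] [Nonempty ι] {X : ι → Type u}
    [∀ i, NormedAddCommGroup (X i)] [∀ i, NormedSpace 𝕜 (X i)] [∀ i, FiniteDimensional 𝕜 (X i)]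
    {Y : Type u} [NormedAddCommGroup Y] [NormedSpace 𝕜 Y] [FiniteDimensional 𝕜 Y]
    (β : ReasonableCrossnorm 𝕜 X) (c : 𝕜) (v : (BetaDual β) ⊗[𝕜] Y),
    tn β (c • v) = ‖c‖ * tn β v
  /-- D1. -/
  D1 : ∀ {ι : Type} [Fintype ι] [Nonempty ι] {X : ι → Type u}
    [∀ i, NormedAddCommGroup (X i)] [∀ i, NormedSpace 𝕜 (X i)] [∀ i, FiniteDimensional 𝕜 (X i)]
    {Y : Type u} [NormedAddCommGroup Y] [NormedSpace 𝕜 Y] [FiniteDimensional 𝕜 Y]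
    (β : ReasonableCrossnorm 𝕜 X) (f : BetaDual β) (C : ℝ), 0 ≤ C →
    (∀ u, ‖f.1 u‖ ≤ C * β.toFun u) → ∀ y : Y, tn β (f ⊗ₜ[𝕜] y) ≤ C * ‖y‖
  /-- D2. -/
  D2 : ∀ {ι : Type} [Fintype ι] [Nonempty ι] {X : ι → Type u}
    [∀ i, NormedAddCommGroup (X i)] [∀ i, NormedSpace 𝕜 (X i)] [∀ i, FiniteDimensional 𝕜 (X i)]
    {Y : Type u} [NormedAddCommGroup Y] [NormedSpace 𝕜 Y] [FiniteDimensional 𝕜 Y]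
    (β : ReasonableCrossnorm 𝕜 X), ∀ p ∈ Segre 𝕜 X, ∀ q ∈ Segre 𝕜 X,
    ∀ (g : Y →L[𝕜] 𝕜) (v : (BetaDual β) ⊗[𝕜] Y),
    ‖evalLD β v ((p - q) ⊗ₜ[𝕜] g)‖ ≤ β.toFun (p - q) * ‖g‖ * tn β v
  /-- D3: the uniform property with respect to Σ-preserving operators. -/
  D3 : ∀ {ι κ : Type} [Fintype ι] [Nonempty ι] [Fintype κ] [Nonempty κ]
    {X : ι → Type u} [∀ i, NormedAddCommGroup (X i)] [∀ i, NormedSpace 𝕜 (X i)] [∀ i, FiniteDimensional 𝕜 (X i)]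
    {Z : κ → Type u} [∀ j, NormedAddCommGroup (Z j)] [∀ j, NormedSpace 𝕜 (Z j)] [∀ j, FiniteDimensional 𝕜 (Z j)]
    {Y W : Type u} [NormedAddCommGroup Y] [NormedSpace 𝕜 Y] [FiniteDimensional 𝕜 Y]
    [NormedAddCommGroup W] [NormedSpace 𝕜 W] [FiniteDimensional 𝕜 W]
    (β : ReasonableCrossnorm 𝕜 X) (θ : ReasonableCrossnorm 𝕜 Z)
    (A : (BetaDual β) →ₗ[𝕜] (BetaDual θ)) (CA : ℝ), 0 ≤ CA →
    (∀ (f : BetaDual β) (C : ℝ), 0 ≤ C → (∀ u, ‖f.1 u‖ ≤ C * β.toFun u) →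
      ∀ w, ‖(A f).1 w‖ ≤ CA * C * θ.toFun w) →
    (∀ q ∈ Segre 𝕜 Z, ∃ p ∈ Segre 𝕜 X, ∀ f : BetaDual β, (A f).1 q = f.1 p) →
    ∀ (B : Y →L[𝕜] W) (v : (BetaDual β) ⊗[𝕜] Y),
    tn θ (TensorProduct.map A B.toLinearMap v) ≤ CA * ‖B‖ * tn β v

end StructuresFin
section Predicates

variable {𝕜 : Type u} [RCLike 𝕜]

/-- Maximality of a Σ-ideal (Definition 3.2):
`A^β(T) = sup A^{β|}(Q_L f_T I_{E₁,…,Eₙ})` over finite dimensional subspaces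
`Eᵢ ⊂ Xᵢ` and finite codimensional closed subspaces `L ⊂ Y`. -/
def SigmaIdeal.IsMaximal (I : SigmaIdeal 𝕜) : Prop :=
  ∀ {ι : Type} [Fintype ι] [Nonempty ι] {X : ι → Type u}
    [∀ i, NormedAddCommGroup (X i)] [∀ i, NormedSpace 𝕜 (X i)]
    [∀ i, CompleteSpace (X i)]
    {Y : Type u} [NormedAddCommGroup Y] [NormedSpace 𝕜 Y] [CompleteSpace Y]
    (β : ReasonableCrossnorm 𝕜 X) (T : MultilinearMap 𝕜 X Y), I.Mem β T →
    I.anorm β T = sSup {r | ∃ (E : ∀ i, Submodule 𝕜 (X i))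
      (_ : ∀ i, FiniteDimensional 𝕜 (E i)) (L : Submodule 𝕜 Y)
      (hL : IsClosed (L : Set Y)) (_ : FiniteDimensional 𝕜 (Y ⧸ L)),
      I.Mem (β.restrict E) (smallOp hL T E) ∧
        r = I.anorm (β.restrict E) (smallOp hL T E)}

/-- A Σ-tensor norm on spaces is finitely generated (Definition 4.3):
`α^β(u; X, Y) = inf α^{β|}(u; E, F)` over finite dimensional subspaces containing `u`. -/
def SigmaTensorNormOnSpaces.IsFinitelyGenerated (α : SigmaTensorNormOnSpaces 𝕜) : Prop :=
  ∀ {ι : Type} [Fintype ι] [Nonempty ι] {X : ι → Type u}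
    [∀ i, NormedAddCommGroup (X i)] [∀ i, NormedSpace 𝕜 (X i)]
    {Y : Type u} [NormedAddCommGroup Y] [NormedSpace 𝕜 Y]
    (β : ReasonableCrossnorm 𝕜 X) (u : (⨂[𝕜] i, X i) ⊗[𝕜] Y),
    α.tn β u = sInf {r | ∃ (E : ∀ i, Submodule 𝕜 (X i))
      (_ : ∀ i, FiniteDimensional 𝕜 (E i)) (F : Submodule 𝕜 Y)
      (_ : FiniteDimensional 𝕜 F) (u₀ : (⨂[𝕜] i, (E i : Type u)) ⊗[𝕜] F),
      TensorProduct.map (PiTensorProduct.map fun i => (E i).subtype) F.subtype u₀ = u ∧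
        r = α.tn (β.restrict E) u₀}

/-- A Σ-tensor norm on duals is cofinitely generated (Definition 4.5):
`ν^β(v) = sup ν^{β|}(R_{E₁,…,Eₙ} ⊗ Q_L (v))` over finite dimensional subspaces
`Eᵢ ⊂ Xᵢ` and finite codimensional closed subspaces `L ⊂ Y`. -/
def SigmaTensorNormOnDuals.IsCofinitelyGenerated (ν : SigmaTensorNormOnDuals 𝕜) : Prop :=
  ∀ {ι : Type} [Fintype ι] [Nonempty ι] {X : ι → Type u}
    [∀ i, NormedAddCommGroup (X i)] [∀ i, NormedSpace 𝕜 (X i)]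
    {Y : Type u} [NormedAddCommGroup Y] [NormedSpace 𝕜 Y]
    (β : ReasonableCrossnorm 𝕜 X) (v : (BetaDual β) ⊗[𝕜] Y),
    ν.tn β v = sSup {r | ∃ (E : ∀ i, Submodule 𝕜 (X i))
      (_ : ∀ i, FiniteDimensional 𝕜 (E i)) (L : Submodule 𝕜 Y)
      (hL : IsClosed (L : Set Y)) (_ : FiniteDimensional 𝕜 (Y ⧸ L)),
      r = ν.tn (β.restrict E)
        (TensorProduct.map (restrictDual β E) L.mkQ v)}

end Predicates

/-! The two bounds are dual to each other: S1 says that `N` is dominated on the generators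
`(p - q) ⊗ y` of `π^β`, so the triangle inequality gives `N ≤ π^β`; S2 says that every
functional `φ ⊗ y*` testing `ε^β` is `N`-bounded, so `ε^β ≤ N`. Conversely `π^β` itself
satisfies S1 and `ε^β` satisfies S2 (after normalizing `φ` and `y*`), and S1 passes to smaller
functionals while S2 passes to larger ones. -/

section FuncSY

variable {𝕜 : Type u} [RCLike 𝕜] {ι : Type} {X : ι → Type u}
    [∀ i, NormedAddCommGroup (X i)] [∀ i, NormedSpace 𝕜 (X i)]
    {Y : Type u} [NormedAddCommGroup Y] [NormedSpace 𝕜 Y]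

theorem funcSY_tmul (φ : (⨂[𝕜] i, X i) →ₗ[𝕜] 𝕜) (g : Y →L[𝕜] 𝕜) (a : ⨂[𝕜] i, X i) (y : Y) :
    funcSY φ g (a ⊗ₜ[𝕜] y) = φ a * g y := by
  simp [funcSY]

theorem funcSY_smul_smul (a b : 𝕜) (φ : (⨂[𝕜] i, X i) →ₗ[𝕜] 𝕜) (g : Y →L[𝕜] 𝕜)
    (u : (⨂[𝕜] i, X i) ⊗[𝕜] Y) :
    funcSY (a • φ) (b • g) u = a * b * funcSY φ g u := by
  rw [funcSY, ContinuousLinearMap.toLinearMap_smul, TensorProduct.smul_tmul_smul, map_smul]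
  rfl

end FuncSY

section SigmaTensorNorm

variable {𝕜 : Type u} [RCLike 𝕜] {ι : Type} [Fintype ι]
    {X : ι → Type u} [∀ i, NormedAddCommGroup (X i)] [∀ i, NormedSpace 𝕜 (X i)]
    {Y : Type u} [NormedAddCommGroup Y] [NormedSpace 𝕜 Y]

theorem zero_mem_Segre [Nonempty ι] : (0 : ⨂[𝕜] i, X i) ∈ Segre 𝕜 X := by
  obtain ⟨i⟩ := ‹Nonempty ι›
  exact ⟨0, (MultilinearMap.map_coord_zero _ i rfl).symm⟩

theorem Segre_eq_range_tprod : Segre 𝕜 X = Set.range (PiTensorProduct.tprod 𝕜) := by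
  ext u
  exact exists_congr fun _ => eq_comm

theorem exists_eq_sum_Segre_tmul (u : (⨂[𝕜] i, X i) ⊗[𝕜] Y) :
    ∃ (m : ℕ) (p : Fin m → ⨂[𝕜] i, X i) (y : Fin m → Y),
      (∀ k, p k ∈ Segre 𝕜 X) ∧ u = ∑ k, p k ⊗ₜ[𝕜] y k := by
  have hspan : Submodule.span 𝕜 (Set.image2 (· ⊗ₜ[𝕜] ·) (Segre 𝕜 X) (Set.univ : Set Y)) = ⊤ := by
    refine (Submodule.map₂_span_span (f := TensorProduct.mk 𝕜 _ _) ..).symm.trans ?_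
    rw [Segre_eq_range_tprod, PiTensorProduct.span_tprod_eq_top, Submodule.span_univ,
      TensorProduct.map₂_mk_top_top_eq_top]
  obtain ⟨m, c, t, hu⟩ := Submodule.mem_span_set'.mp (hspan ▸ Submodule.mem_top (x := u))
  choose p hp y _ ht using fun k => (t k).2
  refine ⟨m, p, fun k => c k • y k, hp, hu.symm.trans (Finset.sum_congr rfl fun k _ => ?_)⟩
  rw [← ht k, TensorProduct.tmul_smul]

variable [Nonempty ι]

theorem ReasonableCrossnorm.toFun_nonneg (β : ReasonableCrossnorm 𝕜 X) (u : ⨂[𝕜] i, X i) :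
    0 ≤ β.toFun u :=
  (epsSeminorm_nonneg u).trans (β.inj_le' u)

theorem bddAbove_epsBetaS_set (β : ReasonableCrossnorm 𝕜 X) (u : (⨂[𝕜] i, X i) ⊗[𝕜] Y) :
    BddAbove {r | ∃ (φ : (⨂[𝕜] i, X i) →ₗ[𝕜] 𝕜) (g : Y →L[𝕜] 𝕜),
      (∀ w, ‖φ w‖ ≤ β.toFun w) ∧ ‖g‖ ≤ 1 ∧ r = ‖funcSY φ g u‖} := by
  obtain ⟨m, p, y, -, rfl⟩ := exists_eq_sum_Segre_tmul u
  refine ⟨∑ k, β.toFun (p k) * ‖y k‖, ?_⟩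
  rintro r ⟨φ, g, hφ, hg, rfl⟩
  rw [map_sum]
  refine (norm_sum_le _ _).trans (Finset.sum_le_sum fun k _ => ?_)
  rw [funcSY_tmul, norm_mul]
  calc ‖φ (p k)‖ * ‖g (y k)‖ ≤ β.toFun (p k) * (‖g‖ * ‖y k‖) :=
        mul_le_mul (hφ _) (g.le_opNorm _) (norm_nonneg _) (β.toFun_nonneg _)
    _ ≤ β.toFun (p k) * ‖y k‖ := by
        gcongr
        · exact β.toFun_nonneg _
        · exact mul_le_of_le_one_left (norm_nonneg _) hg

variable (β : ReasonableCrossnorm 𝕜 X)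

def SatisfiesS1 (N : (⨂[𝕜] i, X i) ⊗[𝕜] Y → ℝ) : Prop :=
  ∀ p ∈ Segre 𝕜 X, ∀ q ∈ Segre 𝕜 X, ∀ y : Y, N ((p - q) ⊗ₜ[𝕜] y) ≤ β.toFun (p - q) * ‖y‖

def SatisfiesS2 (N : (⨂[𝕜] i, X i) ⊗[𝕜] Y → ℝ) : Prop :=
  ∀ (φ : (⨂[𝕜] i, X i) →ₗ[𝕜] 𝕜) (C : ℝ), 0 ≤ C → (∀ w, ‖φ w‖ ≤ C * β.toFun w) →
    ∀ (g : Y →L[𝕜] 𝕜) (u), ‖funcSY φ g u‖ ≤ C * ‖g‖ * N u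

variable {β}

theorem SatisfiesS1.mono {M N : (⨂[𝕜] i, X i) ⊗[𝕜] Y → ℝ} (hM : SatisfiesS1 β M) (hNM : N ≤ M) :
    SatisfiesS1 β N :=
  fun p hp q hq y => (hNM _).trans (hM p hp q hq y)

theorem SatisfiesS2.mono {M N : (⨂[𝕜] i, X i) ⊗[𝕜] Y → ℝ} (hM : SatisfiesS2 β M) (hMN : M ≤ N) :
    SatisfiesS2 β N := fun φ C hC hφ g u =>
  (hM φ C hC hφ g u).trans (mul_le_mul_of_nonneg_left (hMN u) (by positivity))

theorem SatisfiesS1.le_piBetaS {N : Seminorm 𝕜 ((⨂[𝕜] i, X i) ⊗[𝕜] Y)} (hN : SatisfiesS1 β N)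
    (u : (⨂[𝕜] i, X i) ⊗[𝕜] Y) : N u ≤ piBetaS β u := by
  refine le_csInf ?_ ?_
  · obtain ⟨m, p, y, hp, hu⟩ := exists_eq_sum_Segre_tmul u
    exact ⟨_, m, p, fun _ => 0, y, fun k => ⟨hp k, zero_mem_Segre⟩, by simpa using hu, rfl⟩
  · rintro r ⟨m, p, q, y, hpq, rfl, rfl⟩
    exact (Finset.le_sum_of_subadditive N (map_zero N).le (map_add_le_add N) _ _).trans
      (Finset.sum_le_sum fun k _ => hN _ (hpq k).1 _ (hpq k).2 _)

theorem SatisfiesS2.epsBetaS_le {N : Seminorm 𝕜 ((⨂[𝕜] i, X i) ⊗[𝕜] Y)} (hN : SatisfiesS2 β N)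
    (u : (⨂[𝕜] i, X i) ⊗[𝕜] Y) : epsBetaS β u ≤ N u := by
  refine Real.sSup_le ?_ (apply_nonneg N u)
  rintro r ⟨φ, g, hφ, hg, rfl⟩
  calc ‖funcSY φ g u‖ ≤ 1 * ‖g‖ * N u := hN φ 1 zero_le_one (by simpa using hφ) g u
    _ ≤ N u := by
        rw [one_mul]
        exact mul_le_of_le_one_left (apply_nonneg N u) hg

theorem satisfiesS1_piBetaS : SatisfiesS1 β (piBetaS (Y := Y) β) := by
  intro p hp q hq y
  refine csInf_le ⟨0, ?_⟩ ⟨1, fun _ => p, fun _ => q, fun _ => y, fun _ => ⟨hp, hq⟩, by simp, by simp⟩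
  rintro r ⟨m, p', q', y', -, -, rfl⟩
  exact Finset.sum_nonneg fun k _ => mul_nonneg (β.toFun_nonneg _) (norm_nonneg _)

theorem norm_funcSY_le_epsBetaS {φ : (⨂[𝕜] i, X i) →ₗ[𝕜] 𝕜} (hφ : ∀ w, ‖φ w‖ ≤ β.toFun w)
    {g : Y →L[𝕜] 𝕜} (hg : ‖g‖ ≤ 1) (u : (⨂[𝕜] i, X i) ⊗[𝕜] Y) :
    ‖funcSY φ g u‖ ≤ epsBetaS β u :=
  le_csSup (bddAbove_epsBetaS_set β u) ⟨φ, g, hφ, hg, rfl⟩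

theorem satisfiesS2_epsBetaS : SatisfiesS2 β (epsBetaS (Y := Y) β) := by
  intro φ C hC hφ g u
  rcases hC.eq_or_lt with rfl | hC
  · obtain rfl : φ = 0 := LinearMap.ext fun w => norm_le_zero_iff.mp (by simpa using hφ w)
    simp [funcSY]
  rcases eq_or_ne g 0 with rfl | hg0
  · simp [funcSY]
  have hg : 0 < ‖g‖ := norm_pos_iff.mpr hg0
  have hφ' : ∀ w, ‖(((C⁻¹ : ℝ) : 𝕜) • φ) w‖ ≤ β.toFun w := fun w => by
    rw [LinearMap.smul_apply, norm_smul, RCLike.norm_ofReal, abs_of_pos (inv_pos.mpr hC),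
      inv_mul_le_iff₀ hC]
    exact hφ w
  have hg' : ‖((‖g‖⁻¹ : ℝ) : 𝕜) • g‖ ≤ 1 := by
    rw [norm_smul, RCLike.norm_ofReal, abs_of_pos (inv_pos.mpr hg), inv_mul_cancel₀ hg.ne']
  have hnormalized := norm_funcSY_le_epsBetaS hφ' hg' u
  rw [funcSY_smul_smul, norm_mul, norm_mul, RCLike.norm_ofReal, RCLike.norm_ofReal,
    abs_of_pos (inv_pos.mpr hC), abs_of_pos (inv_pos.mpr hg)] at hnormalized
  calc ‖funcSY φ g u‖ = C * ‖g‖ * (C⁻¹ * ‖g‖⁻¹ * ‖funcSY φ g u‖) := by field_simp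
    _ ≤ C * ‖g‖ * epsBetaS β u := by gcongr

end SigmaTensorNorm

theorem sandwich_spaces_iff_S1_S2_general
    {𝕜 : Type u} [RCLike 𝕜] {ι : Type} [Fintype ι] [Nonempty ι]
    {X : ι → Type u} [∀ i, NormedAddCommGroup (X i)] [∀ i, NormedSpace 𝕜 (X i)]
    {Y : Type u} [NormedAddCommGroup Y] [NormedSpace 𝕜 Y]
    (β : ReasonableCrossnorm 𝕜 X) (N : ((⨂[𝕜] i, X i) ⊗[𝕜] Y) → ℝ)
    (hadd : ∀ u v, N (u + v) ≤ N u + N v)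
    (hsmul : ∀ (c : 𝕜) (u), N (c • u) = ‖c‖ * N u) :
    ((∀ p ∈ Segre 𝕜 X, ∀ q ∈ Segre 𝕜 X, ∀ y : Y,
        N ((p - q) ⊗ₜ[𝕜] y) ≤ β.toFun (p - q) * ‖y‖) ∧
      (∀ (φ : (⨂[𝕜] i, X i) →ₗ[𝕜] 𝕜) (C : ℝ), 0 ≤ C →
        (∀ w, ‖φ w‖ ≤ C * β.toFun w) → ∀ (g : Y →L[𝕜] 𝕜) (u),
          ‖funcSY φ g u‖ ≤ C * ‖g‖ * N u))
    ↔ (∀ u, epsBetaS β u ≤ N u ∧ N u ≤ piBetaS β u) := by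
  let Nₛ : Seminorm 𝕜 ((⨂[𝕜] i, X i) ⊗[𝕜] Y) := Seminorm.of N hadd hsmul
  constructor
  · rintro ⟨hS1, hS2⟩ u
    exact ⟨SatisfiesS2.epsBetaS_le (N := Nₛ) hS2 u, SatisfiesS1.le_piBetaS (N := Nₛ) hS1 u⟩
  · intro h
    exact ⟨satisfiesS1_piBetaS.mono fun u => (h u).2, satisfiesS2_epsBetaS.mono fun u => (h u).1⟩

/-- Proposition 4.3: a norm on `X₁⊗⋯⊗Xₙ⊗Y` satisfies S1 and S2 iff it
lies between `ε^β` and `π^β`. -/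
theorem sandwich_spaces_iff_S1_S2
    {𝕜 : Type u} [RCLike 𝕜] {ι : Type} [Fintype ι] [Nonempty ι]
    {X : ι → Type u} [∀ i, NormedAddCommGroup (X i)] [∀ i, NormedSpace 𝕜 (X i)]
    [∀ i, CompleteSpace (X i)]
    {Y : Type u} [NormedAddCommGroup Y] [NormedSpace 𝕜 Y] [CompleteSpace Y]
    (β : ReasonableCrossnorm 𝕜 X) (N : ((⨂[𝕜] i, X i) ⊗[𝕜] Y) → ℝ)
    (hadd : ∀ u v, N (u + v) ≤ N u + N v)
    (hsmul : ∀ (c : 𝕜) (u), N (c • u) = ‖c‖ * N u) :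
    ((∀ p ∈ Segre 𝕜 X, ∀ q ∈ Segre 𝕜 X, ∀ y : Y,
        N ((p - q) ⊗ₜ[𝕜] y) ≤ β.toFun (p - q) * ‖y‖) ∧
      (∀ (φ : (⨂[𝕜] i, X i) →ₗ[𝕜] 𝕜) (C : ℝ), 0 ≤ C →
        (∀ w, ‖φ w‖ ≤ C * β.toFun w) → ∀ (g : Y →L[𝕜] 𝕜) (u),
          ‖funcSY φ g u‖ ≤ C * ‖g‖ * N u))
    ↔ (∀ u, epsBetaS β u ≤ N u ∧ N u ≤ piBetaS β u) :=
  sandwich_spaces_iff_S1_S2_general β N hadd hsmul
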